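/- arXiv:2403.17110 — 2 statements merged into one kernel-verified Lean document; each statement's English description precedes it below -/
import Mathlib

section
/- Let 0 ≤ s ≤ n. The number of parking functions π of length n with π_1 < π_2 < ... < π_s is equal to C(n+1, s) · (n+1)^(n-s-1). -/
/-!
Pollak's argument. Every `f : Fin n → ZMod (n + 1)` has exactly one translate `f - c` whose
lift `(f - c).val + 1` is a parking function: by the cycle lemma applied to the excess
`m ↦ ∑_{j < m} (#f⁻¹(j) - 1)`, which drops by one over each period `n + 1`. Hence pairs
(parking function, shift) correspond bijectively to all such `f`, and the correspondence
preserves injectivity on any set `S` of positions, so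
`(n + 1) · #{parking functions injective on S} = (n + 1)_{|S|} · (n + 1)^(n - |S|)`.
Parking functions are closed under permuting positions, so sorting the values on `S`
identifies those injective on `S` with (increasing on `S`) × `Perm S`.
-/

/-- A parking function of length `n`. -/
def IsParkingFunction (n : ℕ) (π : Fin n → ℕ) : Prop :=
  (∀ i, 1 ≤ π i) ∧ ∃ σ : Equiv.Perm (Fin n),
    Monotone (π ∘ σ) ∧ ∀ i : Fin n, π (σ i) ≤ (i : ℕ) + 1

open Finset Function Nat

section Sorting

variable {ι β : Type*} [LinearOrder ι] [Finite ι] [LinearOrder β]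

theorem exists_perm_strictMono_comp {v : ι → β} (hv : Injective v) :
    ∃ τ : Equiv.Perm ι, StrictMono (v ∘ τ) := by
  have := Fintype.ofFinite ι
  let e := Fintype.orderIsoFinOfCardEq ι rfl
  let σ := Tuple.sort (v ∘ e)
  refine ⟨(e.symm.toEquiv.trans σ).trans e.toEquiv, ?_⟩
  have hmono : Monotone ((v ∘ e) ∘ σ) := Tuple.monotone_sort _
  exact (hmono.comp e.symm.monotone).strictMono_of_injective
    (hv.comp ((e.injective.comp σ.injective).comp e.symm.injective))

theorem StrictMono.eq_and_eq_of_comp_perm_eq {v w : ι → β} {τ σ : Equiv.Perm ι}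
    (hv : StrictMono v) (hw : StrictMono w) (h : v ∘ τ = w ∘ σ) : v = w ∧ τ = σ := by
  have hvw : v = w := by
    refine (hv.range_inj hw).1 ?_
    rw [← τ.surjective.range_comp v, h, σ.surjective.range_comp]
  refine ⟨hvw, Equiv.ext fun x => hv.injective ?_⟩
  subst hvw
  exact congrFun h x

theorem card_injOn_eq_card_strictMonoOn_mul_factorial (S : Set ι) {A : (ι → β) → Prop}
    (hA : ∀ π (σ : Equiv.Perm ι), A π → A (π ∘ σ)) :
    Nat.card {π // A π ∧ S.InjOn π} =
      Nat.card {π // A π ∧ StrictMonoOn π S} * (Nat.card S)! := by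
  classical
  have restrict_comp : ∀ (π : ι → β) (τ : Equiv.Perm S),
      S.domRestrict (π ∘ Equiv.Perm.ofSubtype τ) = S.domRestrict π ∘ τ := by
    intro π τ
    ext a
    simp [Equiv.Perm.ofSubtype_apply_coe]
  have strictMonoOn_iff : ∀ π : ι → β, StrictMonoOn π S ↔ StrictMono (S.domRestrict π) :=
    fun _ => Set.strictMonoOn_iff_strictMono
  let Φ : {π // A π ∧ StrictMonoOn π S} × Equiv.Perm S → {π // A π ∧ S.InjOn π} :=
    fun p => ⟨p.1.1 ∘ Equiv.Perm.ofSubtype p.2, hA _ _ p.1.2.1, by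
      rw [Set.injOn_iff_injective, restrict_comp]
      exact ((strictMonoOn_iff _).1 p.1.2.2).injective.comp p.2.injective⟩
  have hΦ : Bijective Φ := by
    constructor
    · rintro ⟨⟨π, hπ⟩, τ⟩ ⟨⟨π', hπ'⟩, τ'⟩ h
      have h' : π ∘ Equiv.Perm.ofSubtype τ = π' ∘ Equiv.Perm.ofSubtype τ' :=
        congrArg Subtype.val h
      obtain ⟨-, rfl⟩ := ((strictMonoOn_iff _).1 hπ.2).eq_and_eq_of_comp_perm_eq
        ((strictMonoOn_iff _).1 hπ'.2) (by rw [← restrict_comp, ← restrict_comp, h'])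
      obtain rfl := (Equiv.Perm.ofSubtype τ).surjective.injective_comp_right h'
      rfl
    · rintro ⟨ρ, hρA, hρ⟩
      obtain ⟨τ, hτ⟩ := exists_perm_strictMono_comp (Set.injOn_iff_injective.1 hρ)
      refine ⟨⟨⟨ρ ∘ Equiv.Perm.ofSubtype τ, hA _ _ hρA, ?_⟩, τ⁻¹⟩, ?_⟩
      · rwa [strictMonoOn_iff, restrict_comp]
      · ext x
        simp [Φ, map_inv]
  rw [← Nat.card_congr (Equiv.ofBijective Φ hΦ), Nat.card_prod, Nat.card_perm]

end Sorting

theorem card_injOn {ι α : Type*} [Finite ι] [Finite α] (S : Set ι) :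
    Nat.card {f : ι → α // S.InjOn f} =
      (Nat.card α).descFactorial (Nat.card S) * Nat.card α ^ Nat.card ↥Sᶜ := by
  classical
  have := Fintype.ofFinite ι
  have := Fintype.ofFinite α
  let e : {f : ι → α // S.InjOn f} ≃ (S ↪ α) × (↥Sᶜ → α) :=
    ((Equiv.subtypeEquiv (Equiv.piEquivPiSubtypeProd (· ∈ S) fun _ => α)
      fun _ => Set.injOn_iff_injective).trans Equiv.prodSubtypeFstEquivSubtypeProd).trans
      (Equiv.prodCongr (Equiv.subtypeInjectiveEquivEmbedding _ _) (Equiv.refl _))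
  rw [Nat.card_congr e, Nat.card_prod]
  simp only [Nat.card_eq_fintype_card, Fintype.card_embedding_eq, Fintype.card_fun]


section CycleLemma

variable {N : ℕ} {B : ℕ → ℤ}

theorem forall_le_add_iff_forall_le_and_forall_lt (hB : ∀ m, B (m + N) = B m - 1) {a : ℕ}
    (ha : a < N) :
    (∀ k < N, B a ≤ B (a + k)) ↔ (∀ m < N, B a ≤ B m) ∧ ∀ m < a, B a < B m := by
  refine ⟨fun h => ?_, fun ⟨hmin, hfirst⟩ k hk => ?_⟩
  · have hfirst : ∀ m < a, B a < B m := fun m hm => by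
      have := h (m + N - a) (by omega)
      rw [show a + (m + N - a) = m + N by omega, hB] at this
      omega
    refine ⟨fun m hm => ?_, hfirst⟩
    rcases lt_or_ge m a with hma | ham
    · exact (hfirst m hma).le
    · simpa [Nat.add_sub_cancel' ham] using h (m - a) (by omega)
  · rcases lt_or_ge (a + k) N with hak | hak
    · exact hmin _ hak
    · rw [show a + k = (a + k - N) + N by omega, hB]
      have := hfirst (a + k - N) (by omega)
      omega

/-- The cycle lemma; the witness is the first minimiser of `B` on `[0, N)`. -/
theorem existsUnique_forall_le_add (hN : 0 < N) (hB : ∀ m, B (m + N) = B m - 1) :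
    ∃! a, a < N ∧ ∀ k < N, B a ≤ B (a + k) := by
  have hex : ∃ a, a < N ∧ ∀ m < N, B a ≤ B m := by
    obtain ⟨a, ha, hmin⟩ := (range N).exists_min_image B (nonempty_range_iff.2 hN.ne')
    exact ⟨a, mem_range.1 ha, fun m hm => hmin m (mem_range.2 hm)⟩
  obtain ⟨hlt, hmin⟩ := Nat.find_spec hex
  refine ⟨Nat.find hex,
    ⟨hlt, (forall_le_add_iff_forall_le_and_forall_lt hB hlt).2 ⟨hmin, fun m hm => ?_⟩⟩,
    fun a ⟨ha, h⟩ => ?_⟩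
  · have hnot := Nat.find_min hex hm
    push Not at hnot
    obtain ⟨m', hm', hlt'⟩ := hnot (hm.trans hlt)
    exact (hmin m' hm').trans_lt hlt'
  · obtain ⟨hmin', hfirst'⟩ := (forall_le_add_iff_forall_le_and_forall_lt hB ha).1 h
    refine le_antisymm (not_lt.1 fun hlt' => ?_) (Nat.find_min' hex ⟨ha, hmin'⟩)
    exact (hfirst' _ hlt').not_ge (hmin a ha)

end CycleLemma

namespace IsParkingFunction

variable {n : ℕ} {π : Fin n → ℕ}

theorem apply_le (h : IsParkingFunction n π) (i : Fin n) : π i ≤ n := by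
  obtain ⟨-, σ, -, hσ⟩ := h
  simpa using (hσ (σ.symm i)).trans (σ.symm i).isLt

theorem comp_perm (h : IsParkingFunction n π) (e : Equiv.Perm (Fin n)) :
    IsParkingFunction n (π ∘ e) := by
  obtain ⟨hpos, σ, hmono, hσ⟩ := h
  refine ⟨fun i => hpos (e i), σ.trans e.symm, ?_, fun i => by simpa using hσ i⟩
  convert hmono using 1
  ext i
  simp

theorem val_natCast_sub_one_add_one (h : IsParkingFunction n π) (i : Fin n) :
    ((π i : ZMod (n + 1)) - 1).val + 1 = π i := by
  obtain ⟨m, hm⟩ := Nat.exists_eq_add_of_le' (h.1 i)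
  have := h.apply_le i
  rw [hm, Nat.cast_add_one, add_sub_cancel_right, ZMod.val_cast_of_lt (by omega)]

theorem injOn_natCast_sub_one_add_iff (h : IsParkingFunction n π) (c : ZMod (n + 1))
    (S : Set (Fin n)) : S.InjOn (fun i => (π i : ZMod (n + 1)) - 1 + c) ↔ S.InjOn π := by
  have key : ∀ i j,
      (π i : ZMod (n + 1)) - 1 + c = (π j : ZMod (n + 1)) - 1 + c ↔ π i = π j :=
    fun i j => ⟨fun hij => by
      rw [← h.val_natCast_sub_one_add_one i, ← h.val_natCast_sub_one_add_one j,
        (add_left_inj c).1 hij], fun hij => by rw [hij]⟩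
  simp only [Set.InjOn, key]

end IsParkingFunction

theorem isParkingFunction_iff_le_card_filter {n : ℕ} {π : Fin n → ℕ} :
    IsParkingFunction n π ↔ (∀ i, 1 ≤ π i) ∧ ∀ k ≤ n, k ≤ #{i | π i ≤ k} := by
  refine ⟨fun ⟨hpos, σ, _, hσ⟩ => ⟨hpos, fun k hk => ?_⟩, fun ⟨hpos, hcard⟩ => ?_⟩
  · calc k = #(univ : Finset (Fin k)) := by simp
      _ ≤ #{i | π i ≤ k} := by
        refine card_le_card_of_injOn (fun j => σ (Fin.castLE hk j)) (fun j _ => ?_)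
          (σ.injective.comp (Fin.castLE_injective hk)).injOn
        simpa using (hσ _).trans (Nat.succ_le_of_lt j.isLt)
  · let σ := Tuple.sort π
    have hmono : Monotone (π ∘ σ) := Tuple.monotone_sort π
    refine ⟨hpos, σ, hmono, fun i => ?_⟩
    by_contra! hlt
    -- values `≤ i + 1` could then only sit at sorted positions `< i`
    have hsmall : #{j | π j ≤ (i : ℕ) + 1} ≤ i := by
      calc #{j | π j ≤ (i : ℕ) + 1} ≤ #(Iio i) := by
            refine card_le_card_of_injOn σ.symm (fun j hj => ?_) σ.symm.injective.injOn
            replace hj : π j ≤ i + 1 := by simpa using hj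
            by_contra hji
            have hle : π (σ i) ≤ π j := by
              simpa using hmono (show i ≤ σ.symm j by simpa using hji)
            omega
        _ = i := Fin.card_Iio i
    have := hcard (i + 1) i.isLt
    omega

section Pollak

variable {n : ℕ} (f : Fin n → ZMod (n + 1))

def parkingExcess (m : ℕ) : ℤ := ∑ j ∈ range m, ((#{i | f i = j} : ℤ) - 1)

theorem card_filter_val_sub_lt (a : ℕ) {k : ℕ} (hk : k ≤ n + 1) :
    #{i | (f i - a).val < k} = ∑ j ∈ range k, #{i | f i = (a + j : ℕ)} := by
  rw [card_eq_sum_card_fiberwise (f := fun i => (f i - a).val) (t := range k)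
    (fun i hi => by simpa using hi)]
  refine sum_congr rfl fun j hjk => congrArg card (Finset.ext fun i => ?_)
  have hj : j < n + 1 := (mem_range.1 hjk).trans_le hk
  simp only [mem_filter, mem_univ, true_and]
  constructor
  · rintro ⟨-, h⟩
    rw [← h]
    push_cast [ZMod.natCast_zmod_val]
    ring
  · intro h
    rw [h, Nat.cast_add, add_sub_cancel_left, ZMod.val_cast_of_lt hj]
    exact ⟨mem_range.1 hjk, rfl⟩

theorem parkingExcess_add_sub (a : ℕ) {k : ℕ} (hk : k ≤ n + 1) :
    parkingExcess f (a + k) - parkingExcess f a = #{i | (f i - a).val < k} - k := by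
  rw [parkingExcess, parkingExcess, sum_range_add, add_sub_cancel_left,
    card_filter_val_sub_lt f a hk]
  simp

theorem parkingExcess_add_period (m : ℕ) :
    parkingExcess f (m + (n + 1)) = parkingExcess f m - 1 := by
  have h := parkingExcess_add_sub f m le_rfl
  rw [filter_true_of_mem fun i _ => ZMod.val_lt _, Finset.card_univ, Fintype.card_fin] at h
  omega

theorem isParkingFunction_sub_iff (a : ℕ) :
    IsParkingFunction n (fun i => (f i - a).val + 1) ↔
      ∀ k < n + 1, parkingExcess f a ≤ parkingExcess f (a + k) := by
  simp only [isParkingFunction_iff_le_card_filter, le_add_iff_nonneg_left, zero_le,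
    implies_true, true_and, Nat.add_one_le_iff, Nat.lt_succ_iff]
  refine forall₂_congr fun k hk => ?_
  have := parkingExcess_add_sub f a (Nat.le_succ_of_le hk)
  omega

theorem existsUnique_isParkingFunction_sub :
    ∃! c : ZMod (n + 1), IsParkingFunction n (fun i => (f i - c).val + 1) := by
  obtain ⟨a, ⟨ha, hPa⟩, huniq⟩ :=
    existsUnique_forall_le_add (Nat.succ_pos n) (parkingExcess_add_period f)
  refine ⟨a, (isParkingFunction_sub_iff f a).2 hPa, fun c hc => ?_⟩
  rw [← ZMod.natCast_zmod_val c] at hc ⊢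
  rw [huniq _ ⟨ZMod.val_lt c, (isParkingFunction_sub_iff f _).1 hc⟩]

end Pollak

theorem bijective_parkingFunction_shift (n : ℕ) :
    Bijective fun p : {π // IsParkingFunction n π} × ZMod (n + 1) =>
      fun i => (p.1.1 i : ZMod (n + 1)) - 1 + p.2 := by
  have hrec : ∀ π (c : ZMod (n + 1)), IsParkingFunction n π →
      (fun i => ((π i : ZMod (n + 1)) - 1 + c - c).val + 1) = π := fun π c h => by
    simp only [add_sub_cancel_right, h.val_natCast_sub_one_add_one]
  refine ⟨fun ⟨⟨π, hπ⟩, c⟩ ⟨⟨π', hπ'⟩, c'⟩ heq => ?_, fun f => ?_⟩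
  · have heq' : ∀ i, (π i : ZMod (n + 1)) - 1 + c = (π' i : ZMod (n + 1)) - 1 + c' :=
      congrFun heq
    have hc : IsParkingFunction n fun i => ((π i : ZMod (n + 1)) - 1 + c - c).val + 1 := by
      rwa [hrec π c hπ]
    have hc' : IsParkingFunction n fun i => ((π i : ZMod (n + 1)) - 1 + c - c').val + 1 := by
      simp only [heq']
      rwa [hrec π' c' hπ']
    obtain rfl : c = c' := (existsUnique_isParkingFunction_sub _).unique hc hc'
    obtain rfl : π = π' := funext fun i => by
      rw [← hπ.val_natCast_sub_one_add_one i, ← hπ'.val_natCast_sub_one_add_one i,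
        (add_left_inj c).1 (heq' i)]
    rfl
  · obtain ⟨c, hc, -⟩ := existsUnique_isParkingFunction_sub f
    refine ⟨(⟨_, hc⟩, c), funext fun i => ?_⟩
    push_cast [ZMod.natCast_zmod_val]
    ring

theorem card_parkingFunctions_injOn_mul (n : ℕ) (S : Set (Fin n)) :
    Nat.card {π // IsParkingFunction n π ∧ S.InjOn π} * (n + 1) =
      Nat.card {f : Fin n → ZMod (n + 1) // S.InjOn f} := by
  let e := Equiv.ofBijective _ (bijective_parkingFunction_shift n)
  let e' : {p : {π // IsParkingFunction n π} × ZMod (n + 1) // S.InjOn p.1.1} ≃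
      {f : Fin n → ZMod (n + 1) // S.InjOn f} :=
    e.subtypeEquiv fun p => (p.1.2.injOn_natCast_sub_one_add_iff p.2 S).symm
  rw [← Nat.card_congr e', Nat.card_congr (Equiv.prodSubtypeFstEquivSubtypeProd
      (p := fun π : {π // IsParkingFunction n π} => S.InjOn π.1)), Nat.card_prod,
    Nat.card_congr (Equiv.subtypeSubtypeEquivSubtypeInter (IsParkingFunction n) S.InjOn),
    Nat.card_zmod]

theorem card_parkingFunctions_strictMonoOn_mul (n : ℕ) (S : Set (Fin n)) :
    Nat.card {π // IsParkingFunction n π ∧ StrictMonoOn π S} * (n + 1) =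
      (n + 1).choose (Nat.card S) * (n + 1) ^ Nat.card ↥Sᶜ := by
  have h := card_parkingFunctions_injOn_mul n S
  rw [card_injOn_eq_card_strictMonoOn_mul_factorial S fun π σ hπ => hπ.comp_perm σ,
    card_injOn, Nat.card_zmod, descFactorial_eq_factorial_mul_choose] at h
  apply Nat.eq_of_mul_eq_mul_left (factorial_pos (Nat.card S))
  linarith

/-- The number of parking functions of length `n` whose first `s` coordinates are
strictly increasing is `C(n+1, s) · (n+1)^(n-s-1)`. -/
theorem card_parkingFunctions_firstIncreasing (n s : ℕ) (hs : s ≤ n) :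
    (Set.ncard {π : Fin n → ℕ | IsParkingFunction n π ∧
        ∀ i j : Fin n, (i : ℕ) < (j : ℕ) → (j : ℕ) < s → π i < π j} : ℚ) =
      ((n + 1).choose s : ℚ) * ((n : ℚ) + 1) ^ ((n : ℤ) - (s : ℤ) - 1) := by
  let S : Set (Fin n) := {i | (i : ℕ) < s}
  have hS : S.ncard = s := by
    rw [Set.ncard_eq_toFinset_card', Set.toFinset_ofPred, Fin.card_filter_val_lt, min_eq_right hs]
  have hSc : Sᶜ.ncard = n - s := by
    have := Set.ncard_add_ncard_compl S
    rw [Nat.card_fin, hS] at this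
    omega
  have hcount := card_parkingFunctions_strictMonoOn_mul n S
  rw [Nat.card_coe_set_eq, Nat.card_coe_set_eq, hS, hSc] at hcount
  have hmono : ∀ π : Fin n → ℕ,
      (∀ i j : Fin n, (i : ℕ) < j → (j : ℕ) < s → π i < π j) ↔ StrictMonoOn π S :=
    fun π => ⟨fun h i _ j hj hij => h i j hij hj, fun h i j hij hj => h (hij.trans hj) hj hij⟩
  simp_rw [hmono, ← Nat.card_coe_set_eq]
  rw [show (n : ℤ) - s - 1 = ((n - s : ℕ) : ℤ) - 1 by omega, zpow_sub_one₀ (by positivity),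
    zpow_natCast, ← mul_assoc, eq_mul_inv_iff_mul_eq₀ (by positivity)]
  exact_mod_cast hcount
end

section
/- Let 0 ≤ k ≤ n. The number of parking functions of length n with exactly k fixed points equals (1/(n+1)^2) · C(n+1, k) · (n^(n-k+1) + (-1)^(n+k)). -/
/-- The number of fixed points of `π` (indices `i` with `π_i = i`, 1-indexed). -/
def fixedPointCount (n : ℕ) (π : Fin n → ℕ) : ℕ :=
  (Finset.univ.filter (fun i : Fin n => π i = (i : ℕ) + 1)).card

/-!
Pollak's circular argument, refined to keep track of fixed points. Park the cars on a circular lot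
with spots `ZMod (n + 1)`: by Raney's cycle lemma, exactly one of the `n + 1` rotations of any `n`
preferences is a parking function. Rotating a pair `(π, S)` of a parking function and a `j`-set of
its fixed points in all `n + 1` ways gives each `j`-subset of the lot, together with each choice of
preferences of the other `n - j` cars, exactly once. So the number `B j` of such pairs satisfies
`(n + 1) * B j = C(n + 1, j) * (n + 1) ^ (n - j)`, and since `X ^ m = ∑ j, C(m, j) * (X - 1) ^ j`,
the generating polynomial of parking functions by fixed points is
`∑ j, B j * (X - 1) ^ j = ((X + n) ^ (n + 1) - (X - 1) ^ (n + 1)) / (n + 1) ^ 2`.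
-/

open Finset
open scoped Pointwise

theorem existsUnique_lt_forall_le_add {N : ℕ} (hN : 0 < N) (S : ℕ → ℤ)
    (hS : ∀ t, S (t + N) = S t - 1) :
    ∃! e, e < N ∧ ∀ t < N, S e ≤ S (e + t) := by
  refine existsUnique_of_exists_of_unique ?_ ?_
  · obtain ⟨m, hm, hmin⟩ := exists_min_image (range N) S (nonempty_range_iff.2 hN.ne')
    have hex : ∃ e, e < N ∧ S e = S m := ⟨m, mem_range.1 hm, rfl⟩
    obtain ⟨he, hSe⟩ := Nat.find_spec hex
    refine ⟨Nat.find hex, he, fun t ht => ?_⟩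
    rcases lt_or_ge (Nat.find hex + t) N with hlt | hge
    · rw [hSe]; exact hmin _ (mem_range.2 hlt)
    · -- one period on, `S` has dropped by one, but there it was strictly above its minimum
      obtain ⟨s, hs⟩ : ∃ s, Nat.find hex + t = s + N := ⟨_, (Nat.sub_add_cancel hge).symm⟩
      have hne : S s ≠ S m := fun h =>
        Nat.find_min hex (by omega : s < Nat.find hex) ⟨by omega, h⟩
      have hle : S m ≤ S s := hmin _ (mem_range.2 (by omega))
      rw [hs, hS, hSe]
      omega
  · have no_two : ∀ a b, a < b → (∀ t < N, S a ≤ S (a + t)) →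
        b < N ∧ (∀ t < N, S b ≤ S (b + t)) → False := fun a b hab ha ⟨hb, hb'⟩ => by
      have h1 := ha (b - a) (by omega)
      have h2 := hb' (a + N - b) (by omega)
      rw [show a + (b - a) = b by omega] at h1
      rw [show b + (a + N - b) = a + N by omega, hS] at h2
      omega
    rintro a b ⟨ha, ha'⟩ hb
    rcases lt_trichotomy a b with h | h | h
    · exact (no_two a b h ha' hb).elim
    · exact h
    · exact (no_two b a h hb.2 ⟨ha, ha'⟩).elim

theorem ZMod.sum_range_natCast {M : Type*} [AddCommMonoid M] (N : ℕ) [NeZero N]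
    (f : ZMod N → M) : ∑ v ∈ range N, f v = ∑ y, f y :=
  sum_nbij' (↑) ZMod.val (fun _ _ => mem_univ _) (fun y _ => mem_range.2 (ZMod.val_lt y))
    (fun _ hv => ZMod.val_cast_of_lt (mem_range.1 hv)) (fun y _ => ZMod.natCast_zmod_val y)
    (fun _ _ => rfl)

/-- Raney's cycle lemma. -/
theorem ZMod.existsUnique_forall_le_sum_range {N : ℕ} [NeZero N] (a : ZMod N → ℕ)
    (ha : ∑ y, a y + 1 = N) :
    ∃! e : ZMod N, ∀ t < N, t ≤ ∑ v ∈ range t, a (e + v) := by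
  set S : ℕ → ℤ := fun t => ∑ v ∈ range t, (a v : ℤ) - t
  have hsum : ∀ e t : ℕ, (∑ v ∈ range t, a (e + v) : ℤ) = S (e + t) - S e + t := by
    intro e t
    simp only [S, sum_range_add, Nat.cast_add]
    ring
  have hS : ∀ t, S (t + N) = S t - 1 := by
    intro t
    have := hsum t N
    rw [sum_range_natCast N (fun y => (a (t + y) : ℤ)),
      Fintype.sum_equiv (Equiv.addLeft (t : ZMod N)) (fun y => (a (t + y) : ℤ)) (fun y => a y)
        fun _ => rfl] at this
    have ha' : (∑ y, a y : ℤ) + 1 = N := by exact_mod_cast ha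
    omega
  have hgood : ∀ e : ℕ,
      (∀ t < N, t ≤ ∑ v ∈ range t, a (e + v)) ↔ ∀ t < N, S e ≤ S (e + t) := by
    intro e
    refine forall₂_congr fun t _ => ?_
    rw [← Nat.cast_le (α := ℤ), Nat.cast_sum, hsum]
    omega
  obtain ⟨e, ⟨he, hSe⟩, huniq⟩ := existsUnique_lt_forall_le_add (NeZero.pos N) S hS
  refine ⟨e, (hgood e).2 hSe, fun y hy => ?_⟩
  rw [← ZMod.natCast_zmod_val y,
    huniq y.val ⟨ZMod.val_lt y, (hgood _).1 (by rwa [ZMod.natCast_zmod_val])⟩]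

theorem card_mul_card_filter_of_existsUnique {G Ω : Type*} [AddGroup G] [AddAction G Ω]
    [Fintype G] [Fintype Ω] {p q : Ω → Prop} [DecidablePred p] [DecidablePred q]
    (hq : ∀ (c : G) ω, q (c +ᵥ ω) ↔ q ω)
    (hp : ∀ ω, q ω → ∃! c : G, p (c +ᵥ ω)) :
    Fintype.card G * #{ω | q ω ∧ p ω} = #{ω | q ω} := by
  have htranslate : ∀ c : G, #{ω | q ω ∧ p (c +ᵥ ω)} = #{ω | q ω ∧ p ω} := fun c => by
    simp only [card_filter]
    exact Fintype.sum_equiv (AddAction.toPerm c) _ _ fun ω => by simp [hq]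
  calc Fintype.card G * #{ω | q ω ∧ p ω}
      = ∑ c : G, #{ω | q ω ∧ p (c +ᵥ ω)} := by simp [htranslate]
    _ = ∑ ω ∈ univ.filter q, #{c : G | p (c +ᵥ ω)} := by
      simp only [card_filter, sum_filter, ite_sum_zero, ite_and]
      rw [sum_comm]
    _ = #{ω | q ω} := by
      rw [card_eq_sum_ones]
      exact sum_congr rfl fun ω hω =>
        (Fintype.existsUnique_iff_card_one _).1 (hp ω (mem_filter.1 hω).2)

theorem map_univ_val_eq_add {α β : Type*} [Fintype α] (g : α → β) (p : α → Prop)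
    [DecidablePred p] :
    univ.val.map g = (univ.filter p).val.map g + univ.val.map fun x : {a // ¬p a} => g x := by
  rw [show (fun x : {a // ¬p a} => g x) = Subtype.restrict _ g from rfl,
    univ_val_map_subtype_restrict, filter_val, filter_val, ← Multiset.map_add,
    Multiset.filter_add_not]

theorem isParkingFunction_iff {n : ℕ} {π : Fin n → ℕ} :
    IsParkingFunction n π ↔ ∀ t ≤ n, t ≤ #{i | π i ∈ Icc 1 t} := by
  have card_lt : ∀ t ≤ n, #{j : Fin n | (j : ℕ) < t} = t := fun t ht => by
    rw [Fin.card_filter_val_lt, min_eq_right ht]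
  constructor
  · rintro ⟨hpos, σ, -, hle⟩ t ht
    calc t = #({j : Fin n | (j : ℕ) < t} : Finset _) := (card_lt t ht).symm
      _ = #(({j : Fin n | (j : ℕ) < t} : Finset _).map σ.toEmbedding) := (card_map _).symm
      _ ≤ _ := card_le_card fun x hx => by
          obtain ⟨j, hj, rfl⟩ := mem_map.1 hx
          have := hle j
          simp only [mem_filter, mem_univ, true_and, mem_Icc, Equiv.coe_toEmbedding] at hj ⊢
          exact ⟨hpos _, by omega⟩
  · intro h
    have hIcc : ∀ i, π i ∈ Icc 1 n := fun i => filter_card_eq (le_antisymm (card_filter_le _ _)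
      (by rw [card_univ, Fintype.card_fin]; exact h n le_rfl)) i (mem_univ _)
    refine ⟨fun i => (mem_Icc.1 (hIcc i)).1, Tuple.sort π, Tuple.monotone_sort π, fun i => ?_⟩
    by_contra! hlt
    -- the sorting puts every car preferring one of the spots `1, …, i + 1` before position `i`
    have hsub : ({x | π x ∈ Icc 1 ((i : ℕ) + 1)} : Finset _) ⊆
        ({j : Fin n | (j : ℕ) < i} : Finset _).image (Tuple.sort π) := fun x hx => by
      refine mem_image.2 ⟨(Tuple.sort π).symm x, mem_filter.2 ⟨mem_univ _, ?_⟩, by simp⟩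
      by_contra! hij
      have := Tuple.monotone_sort π hij
      simp only [Function.comp_apply, Equiv.apply_symm_apply] at this
      simp only [mem_filter, mem_univ, true_and, mem_Icc] at hx
      omega
    have h1 := h ((i : ℕ) + 1) i.isLt
    have h2 := (card_le_card hsub).trans card_image_le
    rw [card_lt i i.isLt.le] at h2
    omega

theorem IsParkingFunction.le {n : ℕ} {π : Fin n → ℕ} (h : IsParkingFunction n π)
    (i : Fin n) : π i ≤ n := by
  obtain ⟨-, σ, -, hle⟩ := h
  have := hle (σ.symm i)
  rw [Equiv.apply_symm_apply] at this
  have := (σ.symm i).isLt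
  omega

namespace ParkingFunction

section

variable {n : ℕ}

/-- `M` is the multiset of spots preferred by cars on a circular lot with spots `ZMod (n + 1)`;
it parks when, for every `t ≤ n`, at least `t` cars prefer one of the spots `1, …, t`. -/
def IsParkingMultiset (M : Multiset (ZMod (n + 1))) : Prop :=
  ∀ t ≤ n, t ≤ ∑ v ∈ range t, M.count ((v + 1 : ℕ) : ZMod (n + 1))

instance : DecidablePred (IsParkingMultiset (n := n)) := fun _ => by
  unfold IsParkingMultiset; infer_instance

theorem existsUnique_isParkingMultiset_map_add {M : Multiset (ZMod (n + 1))}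
    (hM : Multiset.card M = n) : ∃! c, IsParkingMultiset (M.map (c + ·)) := by
  have hcount : ∀ (c : ZMod (n + 1)) (v : ℕ),
      (M.map (c + ·)).count ((v + 1 : ℕ) : ZMod (n + 1)) = M.count (-c + v + 1) := fun c v => by
    rw [show ((v + 1 : ℕ) : ZMod (n + 1)) = c + (-c + v + 1) by push_cast; ring,
      Multiset.count_map_eq_count' _ _ (add_right_injective c)]
  have hsum : ∑ y, M.count (y + 1) + 1 = n + 1 := by
    rw [Fintype.sum_equiv (Equiv.addRight 1) (fun y => M.count (y + 1)) (M.count ·) (fun _ => rfl),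
      Multiset.sum_count_eq_card (fun _ _ => mem_univ _), hM]
  refine (Equiv.neg _).existsUnique_congr (fun e => ?_) |>.1
    (ZMod.existsUnique_forall_le_sum_range _ hsum)
  simp only [IsParkingMultiset, hcount, Equiv.neg_apply, neg_neg, Nat.lt_succ_iff]

theorem IsParkingMultiset.zero_notMem {M : Multiset (ZMod (n + 1))} (h : IsParkingMultiset M)
    (hM : Multiset.card M = n) : (0 : ZMod (n + 1)) ∉ M := by
  have hsum : ∑ v ∈ range (n + 1), M.count (v : ZMod (n + 1)) = n := by
    rw [ZMod.sum_range_natCast (n + 1) (M.count ·),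
      Multiset.sum_count_eq_card (fun _ _ => mem_univ _), hM]
  rw [sum_range_succ', Nat.cast_zero] at hsum
  have := h n le_rfl
  rw [← Multiset.count_eq_zero]
  omega

theorem sum_range_count_map_univ_val {ι : Type*} [Fintype ι] (g : ι → ZMod (n + 1)) {t : ℕ}
    (ht : t ≤ n) :
    ∑ v ∈ range t, (univ.val.map g).count ((v + 1 : ℕ) : ZMod (n + 1)) =
      #{i | (g i).val ∈ Icc 1 t} := by
  classical
  induction t with
  | zero => simp
  | succ t ih =>
    have hval : ∀ i, g i = ((t + 1 : ℕ) : ZMod (n + 1)) ↔ (g i).val = t + 1 := fun i => by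
      rw [← (ZMod.val_injective _).eq_iff, ZMod.val_cast_of_lt (by omega)]
    have hsplit : univ.filter (fun i => (g i).val ∈ Icc 1 (t + 1)) =
        univ.filter (fun i => (g i).val ∈ Icc 1 t) ∪
          univ.filter (fun i => g i = ((t + 1 : ℕ) : ZMod (n + 1))) := by
      ext i
      simp only [mem_filter, mem_union, mem_univ, true_and, mem_Icc, hval]
      omega
    rw [sum_range_succ, ih (by omega), hsplit, card_union_of_disjoint, Multiset.count_map]
    · simp_rw [eq_comm (a := ((t + 1 : ℕ) : ZMod (n + 1)))]
      rfl
    · refine disjoint_filter.2 fun i _ h1 h2 => ?_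
      rw [hval, mem_Icc] at *
      omega

theorem isParkingFunction_val_iff (g : Fin n → ZMod (n + 1)) :
    IsParkingFunction n (fun i => (g i).val) ↔ IsParkingMultiset (univ.val.map g) := by
  rw [isParkingFunction_iff]
  exact forall₂_congr fun t ht => by rw [sum_range_count_map_univ_val g ht]

/-- Cars are indexed from `0` but spots from `1`: car `i` is a fixed point when it prefers
`spot i = i + 1`. -/
def spot : Fin n ↪ ZMod (n + 1) :=
  ⟨fun i => ((i + 1 : ℕ) : ZMod (n + 1)), fun i j h => by
    have := congrArg ZMod.val h
    rwa [ZMod.val_cast_of_lt (by omega), ZMod.val_cast_of_lt (by omega), add_left_inj,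
      Fin.val_inj] at this⟩

theorem val_spot (i : Fin n) : (spot i).val = i + 1 :=
  ZMod.val_cast_of_lt (by omega)

theorem map_univ_spot : univ.map (spot (n := n)) = {0}ᶜ := by
  ext y
  simp only [mem_map, mem_univ, true_and, mem_compl, mem_singleton]
  refine ⟨fun ⟨i, hi⟩ h => by
    have := val_spot i
    rw [hi, h, ZMod.val_zero] at this
    omega, fun hy => ?_⟩
  have hpos : 0 < y.val := Nat.pos_of_ne_zero ((ZMod.val_ne_zero y).2 hy)
  exact ⟨⟨y.val - 1, by have := ZMod.val_lt y; omega⟩,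
    ZMod.val_injective _ (by rw [val_spot]; simp only; omega)⟩

def fixedPoints (g : Fin n → ZMod (n + 1)) : Finset (Fin n) := {i | g i = spot i}

theorem fixedPointCount_val (g : Fin n → ZMod (n + 1)) :
    fixedPointCount n (fun i => (g i).val) = #(fixedPoints g) := by
  unfold fixedPointCount fixedPoints
  simp_rw [← val_spot, (ZMod.val_injective _).eq_iff]

theorem ncard_parkingFunctions_fixedPoints (k : ℕ) :
    {π : Fin n → ℕ | IsParkingFunction n π ∧ fixedPointCount n π = k}.ncard =
      #{g : Fin n → ZMod (n + 1) |
        IsParkingMultiset (univ.val.map g) ∧ #(fixedPoints g) = k} := by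
  have hinj : Function.Injective fun (g : Fin n → ZMod (n + 1)) i => (g i).val :=
    fun g g' h => funext fun i => ZMod.val_injective _ (congrFun h i)
  rw [← Set.ncard_coe_finset, ← Set.ncard_image_of_injective _ hinj]
  congr 1
  ext π
  simp only [Set.mem_ofPred_eq, coe_filter, mem_univ, true_and, Set.mem_image]
  constructor
  · rintro ⟨hπ, rfl⟩
    have hval : (fun i => ((π i : ZMod (n + 1))).val) = π :=
      funext fun i => ZMod.val_cast_of_lt (Nat.lt_succ_of_le (hπ.le i))
    refine ⟨fun i => π i, ?_, hval⟩
    rw [← isParkingFunction_val_iff, ← fixedPointCount_val, hval]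
    exact ⟨hπ, rfl⟩
  · rintro ⟨g, ⟨hg, rfl⟩, rfl⟩
    exact ⟨(isParkingFunction_val_iff g).2 hg, fixedPointCount_val g⟩

/-- The preferences of cars indexed by `ι` that, together with one car preferring each spot of
`T`, park. -/
def parkingCompletions (T : Finset (ZMod (n + 1))) (ι : Type*) [Fintype ι] [DecidableEq ι] :
    Finset (ι → ZMod (n + 1)) :=
  {h | IsParkingMultiset (T.val + univ.val.map h)}

theorem card_mul_sum_card_parkingCompletions {ι : Type*} [Fintype ι] [DecidableEq ι] {j : ℕ}
    (hj : j + Fintype.card ι = n) :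
    (n + 1) * ∑ T ∈ powersetCard j (univ : Finset (ZMod (n + 1))), #(parkingCompletions T ι) =
      (n + 1).choose j * (n + 1) ^ Fintype.card ι := by
  have hmap : ∀ (c : ZMod (n + 1)) (T : Finset (ZMod (n + 1))) (h : ι → ZMod (n + 1)),
      (c +ᵥ T).val + univ.val.map (c +ᵥ h) = (T.val + univ.val.map h).map (c + ·) := by
    intro c T h
    simp only [vadd_finset_def, vadd_eq_add]
    rw [Multiset.map_add, Multiset.map_map, image_val_of_injOn (add_right_injective c).injOn]
    rfl
  have horbit := card_mul_card_filter_of_existsUnique (G := ZMod (n + 1))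
    (q := fun ω : Finset (ZMod (n + 1)) × (ι → ZMod (n + 1)) => #ω.1 = j)
    (p := fun ω => IsParkingMultiset (ω.1.val + univ.val.map ω.2))
    (fun c ω => by rw [Prod.vadd_fst, card_vadd_finset])
    (fun ω hω => by
      simp only [Prod.vadd_fst, Prod.vadd_snd, hmap]
      refine existsUnique_isParkingMultiset_map_add ?_
      simp [hω, hj])
  rw [ZMod.card] at horbit
  calc (n + 1) * ∑ T ∈ powersetCard j univ, #(parkingCompletions T ι)
      = (n + 1) * #{ω : Finset (ZMod (n + 1)) × (ι → ZMod (n + 1)) |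
          #ω.1 = j ∧ IsParkingMultiset (ω.1.val + univ.val.map ω.2)} := by
        simp only [parkingCompletions, powersetCard_eq_filter, powerset_univ, card_filter,
          Fintype.sum_prod_type, sum_filter, ite_and, ite_sum_zero]
    _ = #{ω : Finset (ZMod (n + 1)) × (ι → ZMod (n + 1)) | #ω.1 = j} := horbit
    _ = #(powersetCard j univ ×ˢ (univ : Finset (ι → ZMod (n + 1)))) := by
        congr 1
        ext ω
        simp
    _ = (n + 1).choose j * (n + 1) ^ Fintype.card ι := by
        simp [card_powersetCard]

theorem card_parkingCompletions_congr {ι ι' : Type*} [Fintype ι] [DecidableEq ι] [Fintype ι']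
    [DecidableEq ι'] (T : Finset (ZMod (n + 1))) (e : ι ≃ ι') :
    #(parkingCompletions T ι) = #(parkingCompletions T ι') :=
  card_equiv (e.arrowCongr (Equiv.refl _)) fun h => by
    simp only [parkingCompletions, mem_filter, mem_univ, true_and]
    change _ ↔ IsParkingMultiset (T.val + univ.val.map (h ∘ e.symm))
    rw [← Multiset.map_map, Multiset.map_univ_val_equiv]

theorem card_isParkingMultiset_subset_fixedPoints (S : Finset (Fin n)) :
    #{g : Fin n → ZMod (n + 1) | IsParkingMultiset (univ.val.map g) ∧ S ⊆ fixedPoints g} =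
      #(parkingCompletions (S.map spot) {i // i ∉ S}) := by
  have hcontent : ∀ g : Fin n → ZMod (n + 1), S ⊆ fixedPoints g →
      univ.val.map g = (S.map spot).val + univ.val.map fun x : {i // i ∉ S} => g x := by
    intro g hg
    rw [map_univ_val_eq_add g (· ∈ S), filter_mem_eq_inter, univ_inter, map_val,
      Multiset.map_congr rfl fun i hi => (mem_filter.1 (hg hi)).2]
  let extend (h : {i // i ∉ S} → ZMod (n + 1)) (i : Fin n) : ZMod (n + 1) :=
    if hi : i ∈ S then spot i else h ⟨i, hi⟩
  have extend_restrict : ∀ h, (fun x : {i // i ∉ S} => extend h x) = h :=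
    fun h => funext fun x => by simp [extend, x.2]
  have fixedPoints_extend : ∀ h, S ⊆ fixedPoints (extend h) :=
    fun h i hi => by simp [extend, fixedPoints, hi]
  refine card_nbij' (fun g x => g x) extend (fun g hg => ?_) (fun h hh => ?_) (fun g hg => ?_)
    (fun h _ => extend_restrict h)
  · simp only [parkingCompletions, coe_filter, Set.mem_ofPred_eq, mem_univ, true_and] at hg ⊢
    rw [← hcontent g hg.2]
    exact hg.1
  · simp only [parkingCompletions, coe_filter, Set.mem_ofPred_eq, mem_univ, true_and] at hh ⊢
    rw [hcontent _ (fixedPoints_extend h), extend_restrict]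
    exact ⟨hh, fixedPoints_extend h⟩
  · simp only [coe_filter, Set.mem_ofPred_eq, mem_univ, true_and] at hg
    funext i
    by_cases hi : i ∈ S
    · simp [extend, hi, (mem_filter.1 (hg.2 hi)).2]
    · simp [extend, hi]

theorem sum_card_parkingCompletions_map_spot {ι : Type*} [Fintype ι] [DecidableEq ι] {j : ℕ}
    (hj : j + Fintype.card ι = n) :
    ∑ S ∈ powersetCard j (univ : Finset (Fin n)), #(parkingCompletions (S.map spot) ι) =
      ∑ T ∈ powersetCard j (univ : Finset (ZMod (n + 1))), #(parkingCompletions T ι) := by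
  trans ∑ T ∈ powersetCard j ({0}ᶜ : Finset (ZMod (n + 1))), #(parkingCompletions T ι)
  · rw [← map_univ_spot, powersetCard_map, sum_map]
    rfl
  refine sum_subset (powersetCard_mono (subset_univ _)) fun T hT hT' => ?_
  obtain ⟨-, hTcard⟩ := mem_powersetCard.1 hT
  -- `T` is not the image of a set of cars, so it contains `0`, which no parking multiset does
  have h0 : (0 : ZMod (n + 1)) ∈ T := by
    by_contra h0
    exact hT' (mem_powersetCard.2
      ⟨fun y hy => by simpa using ne_of_mem_of_not_mem hy h0, hTcard⟩)
  refine card_eq_zero.2 (filter_eq_empty_iff.2 fun h _ hpark => hpark.zero_notMem ?_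
    (Multiset.mem_add.2 (Or.inl h0)))
  simp [hTcard, hj]

def fixedSubsetCount (n j : ℕ) : ℕ :=
  ∑ S ∈ powersetCard j univ,
    #{g : Fin n → ZMod (n + 1) | IsParkingMultiset (univ.val.map g) ∧ S ⊆ fixedPoints g}

theorem succ_mul_fixedSubsetCount {j : ℕ} (hj : j ≤ n) :
    (n + 1) * fixedSubsetCount n j = (n + 1).choose j * (n + 1) ^ (n - j) := by
  have hcompl : ∀ S ∈ powersetCard j (univ : Finset (Fin n)),
      Fintype.card {i // i ∉ S} = n - j :=
    fun S hS => by simp [(mem_powersetCard.1 hS).2]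
  have hcard : j + Fintype.card (Fin (n - j)) = n := by rw [Fintype.card_fin]; omega
  rw [fixedSubsetCount,
    sum_congr rfl fun S hS => (card_isParkingMultiset_subset_fixedPoints S).trans
      (card_parkingCompletions_congr _ (Fintype.equivFinOfCardEq (hcompl S hS))),
    sum_card_parkingCompletions_map_spot hcard, card_mul_sum_card_parkingCompletions hcard,
    Fintype.card_fin]

end

section GeneratingPolynomial

open Polynomial

variable (n : ℕ)

noncomputable def fixedPointsPoly : ℚ[X] :=
  ∑ g ∈ {g : Fin n → ZMod (n + 1) | IsParkingMultiset (univ.val.map g)}, X ^ #(fixedPoints g)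

theorem coeff_fixedPointsPoly (k : ℕ) :
    (fixedPointsPoly n).coeff k =
      #{g : Fin n → ZMod (n + 1) |
        IsParkingMultiset (univ.val.map g) ∧ #(fixedPoints g) = k} := by
  simp only [fixedPointsPoly, finsetSum_coeff, coeff_X_pow, sum_boole, filter_filter, eq_comm]

theorem fixedPointsPoly_eq_sum :
    fixedPointsPoly n = ∑ j ∈ range (n + 1), (fixedSubsetCount n j : ℚ[X]) * (X - 1) ^ j := by
  -- expand `X ^ #F = ((X - 1) + 1) ^ #F` over the subsets of `F`, then exchange the sums
  calc fixedPointsPoly n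
      = ∑ g ∈ {g : Fin n → ZMod (n + 1) | IsParkingMultiset (univ.val.map g)},
          ∑ S ∈ (fixedPoints g).powerset, (X - 1 : ℚ[X]) ^ #S := by
        refine sum_congr rfl fun g _ => ?_
        rw [← sub_add_cancel (X : ℚ[X]) 1, ← sum_pow_mul_eq_add_pow]
        simp
    _ = ∑ S ∈ (univ : Finset (Fin n)).powerset,
          ∑ g ∈ {g : Fin n → ZMod (n + 1) |
              IsParkingMultiset (univ.val.map g) ∧ S ⊆ fixedPoints g}, (X - 1 : ℚ[X]) ^ #S :=
        sum_comm' fun g S => by simp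
    _ = _ := by
        rw [← sum_fiberwise_of_maps_to (g := card) (t := range (n + 1))
          fun S _ => mem_range.2 (Nat.lt_succ_of_le
            (card_le_univ S |>.trans_eq (Fintype.card_fin n)))]
        refine sum_congr rfl fun j _ => ?_
        rw [fixedSubsetCount, Nat.cast_sum, sum_mul, powersetCard_eq_filter]
        refine sum_congr rfl fun S hS => ?_
        rw [sum_const, nsmul_eq_mul, (mem_filter.1 hS).2]

theorem C_mul_fixedPointsPoly :
    C (((n : ℚ) + 1) ^ 2) * fixedPointsPoly n =
      (X + C (n : ℚ)) ^ (n + 1) - (X + C (-1)) ^ (n + 1) := by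
  have hterm : ∀ j ∈ range (n + 1),
      C (((n : ℚ) + 1) ^ 2) * ((fixedSubsetCount n j : ℚ[X]) * (X - 1) ^ j) =
      (X - 1) ^ j * C ((n : ℚ) + 1) ^ (n + 1 - j) * ((n + 1).choose j : ℚ[X]) := fun j hj => by
    have h := congrArg (Nat.cast : ℕ → ℚ[X])
      (succ_mul_fixedSubsetCount (Nat.lt_succ_iff.1 (mem_range.1 hj)))
    simp only [Nat.cast_mul, Nat.cast_pow, Nat.cast_add, Nat.cast_one] at h
    rw [show n + 1 - j = n - j + 1 by have := mem_range.1 hj; omega]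
    simp only [map_pow, map_add, map_natCast, map_one] at h ⊢
    linear_combination (X - 1) ^ j * (↑n + 1) * h
  have hbinom := add_pow (X - 1 : ℚ[X]) (C ((n : ℚ) + 1)) (n + 1)
  rw [sum_range_succ, Nat.choose_self, Nat.sub_self] at hbinom
  have hshift : X + C (n : ℚ) = X - 1 + C ((n : ℚ) + 1) := by
    simp only [map_add, map_one]
    ring
  rw [fixedPointsPoly_eq_sum, mul_sum, sum_congr rfl hterm, hshift, hbinom, map_neg, map_one,
    ← sub_eq_add_neg]
  simp

end GeneratingPolynomial

end ParkingFunction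

/-- The number of parking functions of length `n` with exactly `k` fixed points is
`(1/(n+1)^2) · C(n+1,k) · (n^(n-k+1) + (-1)^(n+k))`. -/
theorem card_parkingFunctions_fixedPoints (n k : ℕ) (hk : k ≤ n) :
    (Set.ncard {π : Fin n → ℕ | IsParkingFunction n π ∧ fixedPointCount n π = k} : ℚ) =
      (1 / ((n : ℚ) + 1) ^ 2) * ((n + 1).choose k : ℚ) *
        ((n : ℚ) ^ (n - k + 1) + (-1 : ℚ) ^ (n + k)) := by
  have hcoeff := congrArg (Polynomial.coeff · k) (ParkingFunction.C_mul_fixedPointsPoly n)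
  simp only [Polynomial.coeff_C_mul, Polynomial.coeff_sub, Polynomial.coeff_X_add_C_pow,
    ParkingFunction.coeff_fixedPointsPoly] at hcoeff
  rw [ParkingFunction.ncard_parkingFunctions_fixedPoints]
  obtain ⟨m, rfl⟩ := Nat.exists_eq_add_of_le hk
  rw [show k + m + 1 - k = m + 1 by omega] at hcoeff
  have hsign : (-1 : ℚ) ^ (k + m + k) = (-1) ^ m := by
    rw [show k + m + k = m + 2 * k by omega, pow_add, pow_mul, neg_one_sq, one_pow, mul_one]
  rw [show k + m - k + 1 = m + 1 by omega, hsign]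
  field_simp
  linear_combination hcoeff
end
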